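/- For all integers m, n ≥ 0, one has R̃(V(m,n)) ⊆ V(m,n+1). -/

import Mathlib

open scoped Classical BigOperators

noncomputable section

namespace CycloMZV

/-- `mu n` is the set `μ_n` of `n`-th roots of unity in `ℂ`. -/
def mu (n : ℕ) : Set ℂ := {x : ℂ | x ^ n = 1}

variable (p M : ℕ) (ζ : ℂ)

/-- `ν_N = {ζ^m : m ≡ 1 (mod q)}` where `q = 6 - p`. -/
def nu : Set ℂ := {x : ℂ | ∃ m : ℕ, m % (6 - p) = 1 ∧ x = ζ ^ m}

/-- `v x` is the `p`-adic valuation of (the least positive) `m` with `ζ ^ m = x`. -/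
def vval (x : ℂ) : ℕ :=
  if h : ∃ m : ℕ, 0 < m ∧ ζ ^ m = x then padicValNat p (Nat.find h) else 0

/-- `Λ_c(x) = {ε ∈ ν_N : ε^(c·p^(v x)) = x}`. -/
def Lam (c : ℤ) (x : ℂ) : Set ℂ :=
  {ε : ℂ | ε ∈ nu p ζ ∧ ε ^ (c * (p : ℤ) ^ vval p ζ x) = x}

/-- Index `(ε, l)` of a basis vector `⟦ε;l⟧_p`. -/
abbrev Idx : Type := ℂ × ℕ

/-- The ambient free `𝔽_p`-module with basis `⟦ε;l⟧_p`, `(ε, l) : ℂ × ℕ`;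
the space `𝒲` is its submodule spanned by the `⟦ε;l⟧_p` with `ε ∈ ν_N`. -/
abbrev Wb (p : ℕ) := Idx →₀ ZMod p

/-- `θ(x)`. -/
def theta (x : ℂ) : Wb p :=
  if x = 1 then 0
  else ∑ᶠ c ∈ ({1, -1} : Set ℤ), ∑ᶠ ε ∈ Lam p ζ c x,
    Finsupp.single ((ε, 0) : Idx) (1 : ZMod p)

/-- `θ̃(x)`. -/
def thetaT (x : ℂ) : Wb p :=
  if x = 1 then -∑ᶠ y ∈ mu (p ^ M), theta p ζ y else theta p ζ x

/-- The ambient free module with basis indexed by `d`-tuples; `𝒲^{⊗d}` is its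
submodule spanned by the basis tensors with all `ε`'s in `ν_N`. -/
abbrev Wt (p d : ℕ) := (Fin d → Idx) →₀ ZMod p

/-- The weight-`k` part `(𝒲^{⊗d})_k`. -/
def WtPart (d k : ℕ) : Submodule (ZMod p) (Wt p d) :=
  Submodule.span (ZMod p)
    {w : Wt p d | ∃ a : Fin d → Idx, (∀ i, (a i).1 ∈ nu p ζ) ∧
      d + ∑ i, (a i).2 = k ∧ w = Finsupp.single a 1}

/-- `𝒲_1^{⊗d}`: the span of the basis tensors `⟦ε_1,…,ε_d;0,…,0⟧_p` with `ε_i ∈ ν_N`. -/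
def W1Part (d : ℕ) : Submodule (ZMod p) (Wt p d) :=
  Submodule.span (ZMod p)
    {w : Wt p d | ∃ a : Fin d → Idx, (∀ i, (a i).1 ∈ nu p ζ ∧ (a i).2 = 0) ∧
      w = Finsupp.single a 1}

/-- Delete the `i`-th entry (0-based) and append `b` at the end. -/
def moveL {d : ℕ} (i : ℕ) (a : Fin d → Idx) (b : Idx) : Fin d → Idx :=
  fun j =>
    if h2 : (j : ℕ) + 1 < d then
      (if (j : ℕ) < i then a j else a ⟨(j : ℕ) + 1, h2⟩)
    else b

/-- Delete `ε_{i+1}` and `l_i` (0-based `i`) and append `b` at the end. -/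
def moveR {d : ℕ} (i : ℕ) (a : Fin d → Idx) (b : Idx) : Fin d → Idx :=
  fun j =>
    if h2 : (j : ℕ) + 1 < d then
      (if (j : ℕ) < i then a j
       else if (j : ℕ) = i then ((a j).1, (a ⟨(j : ℕ) + 1, h2⟩).2)
       else a ⟨(j : ℕ) + 1, h2⟩)
    else b

/-- The second-to-last `l`-entry `l_{d-1}` (and `0` if `d ≤ 1`). -/
def lprev {d : ℕ} (a : Fin d → Idx) : ℕ :=
  if h : 2 ≤ d then (a ⟨d - 2, by omega⟩).2 else 0

/-- The last `l`-entry `l_d` (and `0` if `d = 0`). -/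
def llast {d : ℕ} (a : Fin d → Idx) : ℕ :=
  if h : 1 ≤ d then (a ⟨d - 1, by omega⟩).2 else 0

/-- Replace the last two `l`-entries by `s` and `r`. -/
def updEnd {d : ℕ} (a : Fin d → Idx) (s r : ℕ) : Fin d → Idx :=
  fun j =>
    if (j : ℕ) + 1 = d then ((a j).1, r)
    else if (j : ℕ) + 2 = d then ((a j).1, s)
    else a j

/-- value of `𝓔_d` on the basis tensor indexed by `a`. -/
def Ebase (d : ℕ) (a : Fin d → Idx) : Wt p d :=
  (∑ i : Fin d,
    if h : (i : ℕ) + 1 < d then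
      (if (a i).2 = 0 then
        Finsupp.mapDomain (moveL (i : ℕ) a)
          (theta p ζ ((a i).1 / (a ⟨(i : ℕ) + 1, h⟩).1))
        - Finsupp.mapDomain (moveR (i : ℕ) a)
          (theta p ζ ((a ⟨(i : ℕ) + 1, h⟩).1 / (a i).1))
      else 0)
    else 0)
  + ∑ r ∈ Finset.Icc (llast a) (lprev a + llast a),
      ((-1 : ZMod p) ^ (r - llast a) * (r.choose (llast a) : ZMod p)) •
        Finsupp.single (updEnd a (lprev a + llast a - r) r) (1 : ZMod p)

/-- The map `𝓔_d`. -/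
def Ecal (d : ℕ) : Module.End (ZMod p) (Wt p d) :=
  Finsupp.linearCombination (ZMod p) (Ebase p ζ d)

/-- value of `L̃_i` (0-based `i`) on the basis tensor indexed by `a`. -/
def LtilBase (d i : ℕ) (a : Fin d → Idx) : Wt p d :=
  if h : i + 1 < d then
    (if (a ⟨i, by omega⟩).2 = 0 then
      Finsupp.mapDomain (moveL i a)
        (thetaT p M ζ ((a ⟨i, by omega⟩).1 / (a ⟨i + 1, h⟩).1))
    else 0)
  else 0

/-- `L̃_i` (with 0-based `i`, so the paper's `L̃_i` is `Ltil p M ζ d (i-1)`). -/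
def Ltil (d i : ℕ) : Module.End (ZMod p) (Wt p d) :=
  Finsupp.linearCombination (ZMod p) (LtilBase p M ζ d i)

/-- value of `R̃_i` (0-based `i`) on the basis tensor indexed by `a`. -/
def RtilBase (d i : ℕ) (a : Fin d → Idx) : Wt p d :=
  if h : i + 1 < d then
    (if (a ⟨i, by omega⟩).2 = 0 then
      Finsupp.mapDomain (moveR i a)
        (thetaT p M ζ ((a ⟨i + 1, h⟩).1 / (a ⟨i, by omega⟩).1))
    else 0)
  else 0

/-- `R̃_i` (with 0-based `i`, so the paper's `R̃_i` is `Rtil p M ζ d (i-1)`). -/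
def Rtil (d i : ℕ) : Module.End (ZMod p) (Wt p d) :=
  Finsupp.linearCombination (ZMod p) (RtilBase p M ζ d i)

/-- value of `S` on the basis tensor indexed by `a`. -/
def Sbase (d : ℕ) (a : Fin d → Idx) : Wt p d :=
  ∑ r ∈ Finset.Icc (llast a + 1) (lprev a + llast a),
    ((-1 : ZMod p) ^ (r - llast a) * (r.choose (llast a) : ZMod p)) •
      Finsupp.single (updEnd a (lprev a + llast a - r) r) (1 : ZMod p)

/-- The map `S`. -/
def Sop (d : ℕ) : Module.End (ZMod p) (Wt p d) :=
  Finsupp.linearCombination (ZMod p) (Sbase p d)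

end CycloMZV
namespace CycloMZV

variable (p M : ℕ) (ζ : ℂ)

/-- `G = Gal(ℚ(ζ_N)/ℚ(ζ_q))`, identified with `{a ∈ (ℤ/Nℤ)ˣ : a ≡ 1 (mod q)}`. -/
def Gal : Subgroup (ZMod ((6 - p) * p ^ M))ˣ :=
  (Units.map (ZMod.castHom (show (6 - p) ∣ (6 - p) * p ^ M from ⟨p ^ M, rfl⟩)
    (ZMod (6 - p))).toMonoidHom).ker

/-- The Galois action of `a ∈ (ℤ/Nℤ)ˣ` on roots of unity: `x ↦ x^a`. -/
def gact (σ : (ZMod ((6 - p) * p ^ M))ˣ) (x : ℂ) : ℂ :=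
  x ^ ((σ : ZMod ((6 - p) * p ^ M)).val)

/-- Diagonal Galois action on index tuples. -/
def actTup {d : ℕ} (σ : (ZMod ((6 - p) * p ^ M))ˣ) (a : Fin d → Idx) : Fin d → Idx :=
  fun j => (gact p M σ ((a j).1), (a j).2)

/-- Diagonal Galois action of `σ ∈ G` on `𝒲^{⊗d}`. -/
def actW (d : ℕ) (σ : Gal p M) : Module.End (ZMod p) (Wt p d) :=
  Finsupp.lmapDomain (ZMod p) (ZMod p) (actTup p M (σ : (ZMod ((6 - p) * p ^ M))ˣ))

/-- The group algebra `𝔽_p[G]`. -/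
abbrev GA (p M : ℕ) := MonoidAlgebra (ZMod p) (Gal p M)

/-- Action of a group-algebra element `g ∈ 𝔽_p[G]` on `𝒲^{⊗d}`. -/
def actA (d : ℕ) (g : GA p M) : Module.End (ZMod p) (Wt p d) :=
  Finsupp.sum g.coeff (fun σ c => c • actW p M d σ)

/-- The augmentation ideal `I_G ⊆ 𝔽_p[G]`. -/
def IG : Ideal (GA p M) :=
  RingHom.ker (MonoidAlgebra.lift (ZMod p) (ZMod p) (Gal p M) 1).toRingHom

end CycloMZV
namespace CycloMZV

/-- The subspace `V(m,n) ⊆ 𝒲_1 ⊗ 𝒲_1`. -/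
def Vmn (p M : ℕ) (ζ : ℂ) (m n : ℕ) : Submodule (ZMod p) (Wt p 2) :=
  if n ≤ M then
    Submodule.span (ZMod p)
      {w : Wt p 2 | ∃ g ∈ IG p M ^ m, ∃ ε₁ ∈ nu p ζ, ∃ ε₂ ∈ nu p ζ,
        w = actA p M 2 g
          (∑ᶠ η ∈ mu (p ^ n),
            Finsupp.single (![((ε₁, 0) : Idx), ((η * ε₂, 0) : Idx)]) (1 : ZMod p))}
  else ⊥

end CycloMZV
namespace CycloMZV

/-!
On a generator, `R̃ ⟦ε₁, ηε₂⟧ = ⟦ε₁⟧ ⊗ θ̃(η ε₂/ε₁)`, and `R̃` commutes with `G` because `θ̃`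
is `G`-equivariant (`v` is Galois-invariant). So it suffices to show that
`T = ∑_{η ∈ U(n)} θ̃(η x)`, `x ∈ μ_{p^M}`, is a combination of the orbit sums
`∑_{η ∈ U(n+1)} ⟦ηε;0⟧`, `ε ∈ ν_N`. For `n = M` the sum runs over all of `μ_{p^M}` and
vanishes by the choice of `θ̃(1)`. For `n < M`, `T` is a signed sum of `θ` over `U(n)`-stable
subsets of `μ_{p^M}`. For `ξ ∈ U(n+1)`, multiplication by `ξ` maps `Λ_c(y)` onto
`Λ_c(y ξ^{c p^{v(y)}})`; as `v(y) ≥ 1` the factor `ξ^{c p^{v(y)}}` lies in `U(n)`, and it does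
not change `v(y)`, since `v(y)` only depends on the order of `y` (`mem_mu_pow_iff`). Hence `T`
is `U(n+1)`-invariant, and an invariant vector supported on `ν_N`, where `U(n+1)` acts freely,
is a combination of orbit sums.
-/

open Finsupp Polynomial

section RootsOfUnity

variable {k l : ℕ} {x y : ℂ}

lemma mem_mu : x ∈ mu k ↔ x ^ k = 1 := Iff.rfl

lemma mem_nthRootsFinset_one (hk : k ≠ 0) : x ∈ nthRootsFinset k (1 : ℂ) ↔ x ∈ mu k :=
  mem_nthRootsFinset (Nat.pos_of_ne_zero hk) 1

lemma mu_eq_nthRootsFinset (hk : k ≠ 0) : mu k = ↑(nthRootsFinset k (1 : ℂ)) := by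
  ext x
  rw [Finset.mem_coe, mem_nthRootsFinset_one hk]

lemma finsum_mem_mu {β : Type*} [AddCommMonoid β] (hk : k ≠ 0) (f : ℂ → β) :
    ∑ᶠ η ∈ mu k, f η = ∑ η ∈ nthRootsFinset k (1 : ℂ), f η := by
  rw [mu_eq_nthRootsFinset hk, finsum_mem_coe_finset]

lemma mu_finite (hk : k ≠ 0) : (mu k).Finite := by
  rw [mu_eq_nthRootsFinset hk]
  exact Finset.finite_toSet _

lemma one_mem_mu : (1 : ℂ) ∈ mu k := one_pow k

lemma mul_mem_mu (hx : x ∈ mu k) (hy : y ∈ mu k) : x * y ∈ mu k := by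
  rw [mem_mu, mul_pow, hx, hy, one_mul]

lemma inv_mem_mu (hx : x ∈ mu k) : x⁻¹ ∈ mu k := by
  rw [mem_mu, inv_pow, hx, inv_one]

lemma ne_zero_of_mem_mu (hk : k ≠ 0) (hx : x ∈ mu k) : x ≠ 0 := by
  rintro rfl
  exact zero_ne_one ((zero_pow hk).symm.trans hx)

lemma pow_mem_mu (a : ℕ) (hx : x ∈ mu k) : x ^ a ∈ mu k := by
  rw [mem_mu, ← pow_mul, mul_comm, pow_mul, hx, one_pow]

lemma zpow_mem_mu (c : ℤ) (hx : x ∈ mu k) : x ^ c ∈ mu k := by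
  rw [mem_mu, ← zpow_natCast, ← zpow_mul, mul_comm, zpow_mul, zpow_natCast, hx, one_zpow]

lemma mul_mem_mu_iff (hk : k ≠ 0) (hx : x ∈ mu k) : x * y ∈ mu k ↔ y ∈ mu k := by
  refine ⟨fun h => ?_, mul_mem_mu hx⟩
  simpa [inv_mul_cancel_left₀ (ne_zero_of_mem_mu hk hx)] using mul_mem_mu (inv_mem_mu hx) h

lemma pow_zpow_comm (x : ℂ) (a : ℕ) (c : ℤ) : (x ^ a) ^ c = (x ^ c) ^ a := by
  rw [← zpow_natCast, ← zpow_natCast (x ^ c), ← zpow_mul, ← zpow_mul, mul_comm]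

lemma mu_mono (h : k ∣ l) : mu k ⊆ mu l := by
  rintro x hx
  obtain ⟨c, rfl⟩ := h
  rw [mem_mu, pow_mul, hx, one_pow]

lemma sum_nthRootsFinset_mul {β : Type*} [AddCommMonoid β] (hk : k ≠ 0) (hx : x ∈ mu k)
    (f : ℂ → β) :
    ∑ η ∈ nthRootsFinset k (1 : ℂ), f (η * x) = ∑ η ∈ nthRootsFinset k (1 : ℂ), f η := by
  have hx0 := ne_zero_of_mem_mu hk hx
  refine Finset.sum_nbij' (· * x) (· * x⁻¹) (fun η hη => ?_) (fun η hη => ?_)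
    (fun η _ => mul_inv_cancel_right₀ hx0 η) (fun η _ => inv_mul_cancel_right₀ hx0 η)
    (fun _ _ => rfl)
  · exact (mem_nthRootsFinset_one hk).2 (mul_mem_mu ((mem_nthRootsFinset_one hk).1 hη) hx)
  · exact (mem_nthRootsFinset_one hk).2
      (mul_mem_mu ((mem_nthRootsFinset_one hk).1 hη) (inv_mem_mu hx))

lemma pow_pow_eq_of_modEq {N a b : ℕ} {x : ℂ} (hab : a * b ≡ 1 [MOD N]) (hx : x ∈ mu N) :
    (x ^ a) ^ b = x := by
  rw [← pow_mul]
  exact (pow_eq_pow_of_modEq hab hx).trans (pow_one x)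

lemma zpow_mem_mu_pow {p i j v : ℕ} (hx : x ∈ mu (p ^ j)) (hj : j ≤ v + i) (c : ℤ) :
    x ^ (c * (p : ℤ) ^ v) ∈ mu (p ^ i) := by
  rw [mul_comm, zpow_mul, ← Nat.cast_pow, zpow_natCast]
  refine zpow_mem_mu c ?_
  rw [mem_mu, ← pow_mul, ← pow_add]
  exact mu_mono (pow_dvd_pow p hj) hx

end RootsOfUnity

section Valuation

variable {p K : ℕ} {ζ y : ℂ}

lemma mem_mu_pow_iff (hP : p.Prime) (hζ : IsPrimitiveRoot ζ (p ^ K)) (hy : y ∈ mu (p ^ K))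
    (a : ℕ) : y ∈ mu (p ^ a) ↔ K ≤ vval p ζ y + a := by
  have := Fact.mk hP
  have : NeZero (p ^ K) := ⟨pow_ne_zero K hP.ne_zero⟩
  obtain ⟨i, -, rfl⟩ := hζ.eq_pow_of_pow_eq_one hy
  have hex : ∃ m, 0 < m ∧ ζ ^ m = ζ ^ i :=
    ⟨i + p ^ K, Nat.add_pos_right _ (pow_pos hP.pos K),
      by rw [pow_add, hζ.pow_eq_one, mul_one]⟩
  obtain ⟨hm0, hm⟩ := Nat.find_spec hex
  rw [vval, dif_pos hex, mem_mu,
    show (ζ ^ i) ^ p ^ a = ζ ^ (Nat.find hex * p ^ a) by rw [pow_mul, hm], hζ.pow_eq_one_iff_dvd,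
    padicValNat_dvd_iff_le (Nat.mul_ne_zero hm0.ne' (pow_ne_zero a hP.ne_zero)),
    padicValNat.mul hm0.ne' (pow_ne_zero a hP.ne_zero), padicValNat.prime_pow]

lemma vval_lt (hP : p.Prime) (hζ : IsPrimitiveRoot ζ (p ^ K)) (hy : y ∈ mu (p ^ K))
    (hy1 : y ≠ 1) : vval p ζ y < K := by
  have := (mem_mu_pow_iff hP hζ hy 0).not.1 (by rwa [pow_zero, mem_mu, pow_one])
  omega

lemma vval_mul_eq (hP : p.Prime) (hζ : IsPrimitiveRoot ζ (p ^ K)) (hy : y ∈ mu (p ^ K))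
    (hy1 : y ≠ 1) {z : ℂ} (hz : z ∈ mu (p ^ (K - vval p ζ y - 1))) :
    vval p ζ (y * z) = vval p ζ y := by
  have hv := vval_lt hP hζ hy hy1
  have hzK : z ∈ mu (p ^ K) := mu_mono (pow_dvd_pow p (by omega)) hz
  have hyz : y * z ∈ mu (p ^ K) := mul_mem_mu hy hzK
  have hge := (mem_mu_pow_iff hP hζ hyz (K - vval p ζ y)).1
    (mul_mem_mu ((mem_mu_pow_iff hP hζ hy _).2 (by omega))
      (mu_mono (pow_dvd_pow p (by omega)) hz))
  have hlt : ¬ y ∈ mu (p ^ (K - vval p ζ y - 1)) := by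
    rw [mem_mu_pow_iff hP hζ hy]; omega
  have hle : ¬ y * z ∈ mu (p ^ (K - vval p ζ y - 1)) := by
    rwa [mul_comm, mul_mem_mu_iff (pow_ne_zero _ hP.ne_zero) hz]
  rw [mem_mu_pow_iff hP hζ hyz] at hle
  omega

lemma vval_pow_eq (hP : p.Prime) (hζ : IsPrimitiveRoot ζ (p ^ K)) (hy : y ∈ mu (p ^ K))
    (hy1 : y ≠ 1) {a b : ℕ} (hab : (y ^ a) ^ b = y) : vval p ζ (y ^ a) = vval p ζ y := by
  have hya : y ^ a ∈ mu (p ^ K) := pow_mem_mu a hy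
  have hya1 : y ^ a ≠ 1 := fun h => hy1 (by rw [← hab, h, one_pow])
  have hiff : ∀ i, K ≤ vval p ζ (y ^ a) + i ↔ K ≤ vval p ζ y + i := fun i => by
    rw [← mem_mu_pow_iff hP hζ hya, ← mem_mu_pow_iff hP hζ hy]
    exact ⟨fun h => hab ▸ pow_mem_mu b h, pow_mem_mu a⟩
  have h1 := (hiff (K - vval p ζ y)).2 (by omega)
  have h2 := (hiff (K - vval p ζ (y ^ a))).1 (by omega)
  have := vval_lt hP hζ hy hy1
  have := vval_lt hP hζ hya hya1
  omega

end Valuation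

section Nu

variable {p M : ℕ} {ζ x : ℂ}

lemma nu_subset_mu (hζ : IsPrimitiveRoot ζ ((6 - p) * p ^ M)) :
    nu p ζ ⊆ mu ((6 - p) * p ^ M) := by
  rintro x ⟨m, -, rfl⟩
  rw [mem_mu, ← pow_mul, mul_comm, pow_mul, hζ.pow_eq_one, one_pow]

lemma mem_nu_iff (hp : p ≠ 0) (hq : 2 ≤ 6 - p) (hζ : IsPrimitiveRoot ζ ((6 - p) * p ^ M)) :
    x ∈ nu p ζ ↔ x ^ p ^ M = ζ ^ p ^ M := by
  have h1 : 1 % (6 - p) = 1 := Nat.mod_eq_of_lt (by omega)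
  have hN : (6 - p) * p ^ M ≠ 0 := Nat.mul_ne_zero (by omega) (pow_ne_zero M hp)
  have hmod : ∀ m : ℕ, ζ ^ (m * p ^ M) = ζ ^ p ^ M ↔ m ≡ 1 [MOD 6 - p] := fun m => by
    nth_rewrite 2 [← one_mul (p ^ M)]
    rw [(hζ.isOfFinOrder hN).pow_eq_pow_iff_modEq, ← hζ.eq_orderOf]
    exact ⟨Nat.ModEq.mul_right_cancel' (pow_ne_zero M hp), Nat.ModEq.mul_right' _⟩
  constructor
  · rintro ⟨m, hm, rfl⟩
    rw [← pow_mul, hmod, Nat.ModEq, hm, h1]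
  · intro hx
    have : NeZero ((6 - p) * p ^ M) := ⟨hN⟩
    have hxN : x ^ ((6 - p) * p ^ M) = 1 := by
      rw [mul_comm, pow_mul, hx, ← pow_mul, mul_comm, hζ.pow_eq_one]
    obtain ⟨m, -, rfl⟩ := hζ.eq_pow_of_pow_eq_one hxN
    rw [← pow_mul, hmod] at hx
    exact ⟨m, Eq.trans hx h1, rfl⟩

lemma mul_mem_nu (hp : p ≠ 0) (hq : 2 ≤ 6 - p) (hζ : IsPrimitiveRoot ζ ((6 - p) * p ^ M))
    {η : ℂ} (hη : η ∈ mu (p ^ M)) (hx : x ∈ nu p ζ) : η * x ∈ nu p ζ := by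
  rw [mem_nu_iff hp hq hζ] at hx ⊢
  rw [mul_pow, hη, one_mul, hx]

lemma div_mem_mu_of_mem_nu (hp : p ≠ 0) (hq : 2 ≤ 6 - p)
    (hζ : IsPrimitiveRoot ζ ((6 - p) * p ^ M)) {ε₁ ε₂ : ℂ} (h₁ : ε₁ ∈ nu p ζ)
    (h₂ : ε₂ ∈ nu p ζ) : ε₂ / ε₁ ∈ mu (p ^ M) := by
  rw [mem_nu_iff hp hq hζ] at h₁ h₂
  rw [mem_mu, div_pow, h₁, h₂, div_self (pow_ne_zero _ (hζ.ne_zero (by positivity)))]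

lemma pow_mem_nu (hp : p ≠ 0) (hq : 2 ≤ 6 - p) (hζ : IsPrimitiveRoot ζ ((6 - p) * p ^ M))
    {a : ℕ} (ha : a ≡ 1 [MOD 6 - p]) (hx : x ∈ nu p ζ) : x ^ a ∈ nu p ζ := by
  rw [mem_nu_iff hp hq hζ] at hx ⊢
  rw [← pow_mul, mul_comm, pow_mul, hx]
  refine (pow_eq_pow_of_modEq ha ?_).trans (pow_one _)
  rw [← pow_mul, mul_comm, hζ.pow_eq_one]

end Nu

section Setting

variable {p : ℕ}

lemma prime_of_eq_two_or_three (hp : p = 2 ∨ p = 3) : p.Prime := by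
  rcases hp with rfl | rfl
  exacts [Nat.prime_two, Nat.prime_three]

lemma two_le_six_sub (hp : p = 2 ∨ p = 3) : 2 ≤ 6 - p := by omega

lemma exists_six_sub_mul_pow_eq (hp : p = 2 ∨ p = 3) (M : ℕ) :
    ∃ K, M < K ∧ (6 - p) * p ^ M = p ^ K := by
  rcases hp with rfl | rfl
  exacts [⟨M + 2, by omega, by ring⟩, ⟨M + 1, by omega, by ring⟩]

end Setting

section Theta

variable {p M : ℕ} {ζ : ℂ}

def sumSingle (p : ℕ) (S : Set ℂ) : Wb p := ∑ᶠ ε ∈ S, single ((ε, 0) : Idx) (1 : ZMod p)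

lemma sumSingle_mem_supported (S : Set ℂ) :
    sumSingle p S ∈ supported (ZMod p) (ZMod p) (S ×ˢ {0}) :=
  finsum_mem_induction (· ∈ supported (ZMod p) (ZMod p) (S ×ˢ {0})) (Submodule.zero_mem _)
    (fun _ _ => Submodule.add_mem _)
    (fun _ hε => single_mem_supported (ZMod p) _ (Set.mk_mem_prod hε rfl))

lemma mapDomain_sumSingle {S : Set ℂ} (hS : S.Finite) {f : ℂ → ℂ} (hf : Set.InjOn f S) :
    mapDomain (Prod.map f id) (sumSingle p S) = sumSingle p (f '' S) := by
  rw [sumSingle, sumSingle, finsum_mem_image hf, finsum_mem_eq_finite_toFinset_sum _ hS,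
    finsum_mem_eq_finite_toFinset_sum _ hS, mapDomain_finsetSum]
  simp only [mapDomain_single, Prod.map, id]

lemma theta_one : theta p ζ 1 = 0 := if_pos rfl

lemma theta_of_ne_one {x : ℂ} (hx : x ≠ 1) :
    theta p ζ x = sumSingle p (Lam p ζ 1 x) + sumSingle p (Lam p ζ (-1) x) := by
  rw [theta, if_neg hx, finsum_mem_pair (by decide : (1 : ℤ) ≠ -1)]
  rfl

lemma thetaT_of_ne_one {x : ℂ} (hx : x ≠ 1) : thetaT p M ζ x = theta p ζ x := if_neg hx

lemma thetaT_eq (x : ℂ) :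
    thetaT p M ζ x = theta p ζ x + if x = 1 then thetaT p M ζ 1 else 0 := by
  by_cases hx : x = 1
  · rw [if_pos hx, hx, theta_one, zero_add]
  · rw [if_neg hx, add_zero, thetaT_of_ne_one hx]

lemma theta_mem_supported (x : ℂ) :
    theta p ζ x ∈ supported (ZMod p) (ZMod p) (nu p ζ ×ˢ {0}) := by
  by_cases hx : x = 1
  · rw [hx, theta_one]
    exact Submodule.zero_mem _
  · have hsub : ∀ c, Lam p ζ c x ×ˢ {0} ⊆ nu p ζ ×ˢ ({0} : Set ℕ) := fun c =>
      Set.prod_mono (fun _ h => h.1) le_rfl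
    rw [theta_of_ne_one hx]
    exact Submodule.add_mem _ (supported_mono (hsub 1) (sumSingle_mem_supported _))
      (supported_mono (hsub (-1)) (sumSingle_mem_supported _))

lemma thetaT_mem_supported (x : ℂ) :
    thetaT p M ζ x ∈ supported (ZMod p) (ZMod p) (nu p ζ ×ˢ {0}) := by
  unfold thetaT
  split_ifs
  · exact Submodule.neg_mem _ (finsum_mem_induction (· ∈ supported _ _ _) (Submodule.zero_mem _)
      (fun _ _ => Submodule.add_mem _) (fun y _ => theta_mem_supported y))
  · exact theta_mem_supported x

lemma Lam_finite (hp : p ≠ 0) (hq : 2 ≤ 6 - p) (hζ : IsPrimitiveRoot ζ ((6 - p) * p ^ M))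
    (c : ℤ) (x : ℂ) : (Lam p ζ c x).Finite :=
  (mu_finite (Nat.mul_ne_zero (by omega) (pow_ne_zero M hp))).subset
    fun _ h => nu_subset_mu hζ h.1

end Theta

section Galois

variable {p M : ℕ} {ζ : ℂ} {a b : ℕ}

lemma image_pow_Lam (hp : p = 2 ∨ p = 3) (hζ : IsPrimitiveRoot ζ ((6 - p) * p ^ M))
    (ha : a ≡ 1 [MOD 6 - p]) (hab : a * b ≡ 1 [MOD (6 - p) * p ^ M]) {y : ℂ}
    (hy : y ∈ mu ((6 - p) * p ^ M)) (hy1 : y ≠ 1) (c : ℤ) :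
    (· ^ a) '' Lam p ζ c y = Lam p ζ c (y ^ a) := by
  have hP := prime_of_eq_two_or_three hp
  have hq := two_le_six_sub hp
  obtain ⟨K, -, hK⟩ := exists_six_sub_mul_pow_eq hp M
  have hb : b ≡ 1 [MOD 6 - p] := by
    simpa using (ha.mul_right b).symm.trans (hab.of_mul_right _)
  have hv : vval p ζ (y ^ a) = vval p ζ y := by
    rw [hK] at hζ hy
    exact vval_pow_eq hP hζ hy hy1 (pow_pow_eq_of_modEq (hK ▸ hab) hy)
  ext ε'
  constructor
  · rintro ⟨ε, ⟨hε, hεy⟩, rfl⟩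
    refine ⟨pow_mem_nu hP.ne_zero hq hζ ha hε, ?_⟩
    rw [hv, pow_zpow_comm, hεy]
  · rintro ⟨hε', hε'y⟩
    refine ⟨ε' ^ b, ⟨pow_mem_nu hP.ne_zero hq hζ hb hε', ?_⟩, ?_⟩
    · rw [hv] at hε'y
      rw [pow_zpow_comm, hε'y]
      exact pow_pow_eq_of_modEq hab hy
    · exact pow_pow_eq_of_modEq (mul_comm a b ▸ hab) (nu_subset_mu hζ hε')

lemma mapDomain_pow_theta (hp : p = 2 ∨ p = 3) (hζ : IsPrimitiveRoot ζ ((6 - p) * p ^ M))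
    (ha : a ≡ 1 [MOD 6 - p]) (hab : a * b ≡ 1 [MOD (6 - p) * p ^ M]) {y : ℂ}
    (hy : y ∈ mu ((6 - p) * p ^ M)) :
    mapDomain (Prod.map (· ^ a) id) (theta p ζ y) = theta p ζ (y ^ a) := by
  by_cases hy1 : y = 1
  · rw [hy1, one_pow, theta_one, mapDomain_zero]
  have hya1 : y ^ a ≠ 1 := fun h => hy1 (by rw [← pow_pow_eq_of_modEq hab hy, h, one_pow])
  have hinj : ∀ c, Set.InjOn (· ^ a) (Lam p ζ c y) := fun c =>
    Set.LeftInvOn.injOn (f₁' := (· ^ b))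
      fun ε hε => pow_pow_eq_of_modEq hab (nu_subset_mu hζ hε.1)
  have hfin := Lam_finite (prime_of_eq_two_or_three hp).ne_zero (two_le_six_sub hp) hζ
  rw [theta_of_ne_one hy1, theta_of_ne_one hya1, mapDomain_add,
    mapDomain_sumSingle (hfin _ _) (hinj _), mapDomain_sumSingle (hfin _ _) (hinj _),
    image_pow_Lam hp hζ ha hab hy hy1, image_pow_Lam hp hζ ha hab hy hy1]

lemma mapDomain_pow_thetaT (hp : p = 2 ∨ p = 3) (hζ : IsPrimitiveRoot ζ ((6 - p) * p ^ M))
    (ha : a ≡ 1 [MOD 6 - p]) (hab : a * b ≡ 1 [MOD (6 - p) * p ^ M]) {x : ℂ}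
    (hx : x ∈ mu (p ^ M)) :
    mapDomain (Prod.map (· ^ a) id) (thetaT p M ζ x) = thetaT p M ζ (x ^ a) := by
  have hsub : mu (p ^ M) ⊆ mu ((6 - p) * p ^ M) := mu_mono (dvd_mul_left _ _)
  by_cases hx1 : x = 1
  · have hpM : p ^ M ≠ 0 := pow_ne_zero M (prime_of_eq_two_or_three hp).ne_zero
    have hR : ∀ y, y ∈ nthRootsFinset (p ^ M) (1 : ℂ) ↔ y ∈ mu (p ^ M) := fun _ =>
      mem_nthRootsFinset_one hpM
    rw [hx1, one_pow, thetaT, if_pos rfl, finsum_mem_mu hpM,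
      ← lmapDomain_apply (ZMod p) (ZMod p), map_neg, map_sum, neg_inj]
    refine Finset.sum_nbij' (· ^ a) (· ^ b) (fun y hy => ?_) (fun y hy => ?_)
      (fun y hy => ?_) (fun y hy => ?_) (fun y hy => ?_)
    · exact (hR _).2 (pow_mem_mu a ((hR y).1 hy))
    · exact (hR _).2 (pow_mem_mu b ((hR y).1 hy))
    · exact pow_pow_eq_of_modEq hab (hsub ((hR y).1 hy))
    · exact pow_pow_eq_of_modEq (mul_comm a b ▸ hab) (hsub ((hR y).1 hy))
    · exact mapDomain_pow_theta hp hζ ha hab (hsub ((hR y).1 hy))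
  · have hxa1 : x ^ a ≠ 1 := fun h => hx1 (by
      rw [← pow_pow_eq_of_modEq hab (hsub hx), h, one_pow])
    rw [thetaT_of_ne_one hx1, thetaT_of_ne_one hxa1]
    exact mapDomain_pow_theta hp hζ ha hab (hsub hx)

end Galois

section Twist

variable {p M n : ℕ} {ζ ξ y : ℂ}

def twist (p : ℕ) (ζ ξ : ℂ) (c : ℤ) (y : ℂ) : ℂ := y * ξ ^ (c * (p : ℤ) ^ vval p ζ y)

lemma one_le_vval (hp : p = 2 ∨ p = 3) (hζ : IsPrimitiveRoot ζ ((6 - p) * p ^ M))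
    (hy : y ∈ mu (p ^ M)) : 1 ≤ vval p ζ y := by
  obtain ⟨K, hMK, hK⟩ := exists_six_sub_mul_pow_eq hp M
  rw [hK] at hζ
  have := (mem_mu_pow_iff (prime_of_eq_two_or_three hp) hζ
    (mu_mono (pow_dvd_pow p hMK.le) hy) M).1 hy
  omega

lemma vval_twist (hp : p = 2 ∨ p = 3) (hζ : IsPrimitiveRoot ζ ((6 - p) * p ^ M))
    (hy : y ∈ mu (p ^ M)) (hy1 : y ≠ 1) (hξ : ξ ∈ mu (p ^ M)) (c : ℤ) :
    vval p ζ (twist p ζ ξ c y) = vval p ζ y := by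
  have hP := prime_of_eq_two_or_three hp
  obtain ⟨K, hMK, hK⟩ := exists_six_sub_mul_pow_eq hp M
  rw [hK] at hζ
  have hyK : y ∈ mu (p ^ K) := mu_mono (pow_dvd_pow p hMK.le) hy
  have hv := vval_lt hP hζ hyK hy1
  exact vval_mul_eq hP hζ hyK hy1 (zpow_mem_mu_pow hξ (by omega) c)

lemma twist_ne_one (hp : p = 2 ∨ p = 3) (hζ : IsPrimitiveRoot ζ ((6 - p) * p ^ M))
    (hy : y ∈ mu (p ^ M)) (hy1 : y ≠ 1) (hξ : ξ ∈ mu (p ^ M)) (c : ℤ) :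
    twist p ζ ξ c y ≠ 1 := by
  have hP := prime_of_eq_two_or_three hp
  obtain ⟨K, hMK, hK⟩ := exists_six_sub_mul_pow_eq hp M
  have hv := vval_twist hp hζ hy hy1 hξ c
  rw [hK] at hζ
  have hlt := vval_lt hP hζ (mu_mono (pow_dvd_pow p hMK.le) hy) hy1
  intro h
  have := (mem_mu_pow_iff hP hζ one_mem_mu 0).1 one_mem_mu
  rw [← h, hv] at this
  omega

lemma twist_neg_twist (hp : p = 2 ∨ p = 3) (hζ : IsPrimitiveRoot ζ ((6 - p) * p ^ M))
    (hy : y ∈ mu (p ^ M)) (hy1 : y ≠ 1) (hξ : ξ ∈ mu (p ^ M)) (c : ℤ) :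
    twist p ζ ξ (-c) (twist p ζ ξ c y) = y := by
  have hξ0 : ξ ≠ 0 :=
    ne_zero_of_mem_mu (pow_ne_zero M (prime_of_eq_two_or_three hp).ne_zero) hξ
  rw [twist, vval_twist hp hζ hy hy1 hξ c, twist, neg_mul, zpow_neg,
    mul_inv_cancel_right₀ (zpow_ne_zero _ hξ0)]

lemma image_mul_Lam (hp : p = 2 ∨ p = 3) (hζ : IsPrimitiveRoot ζ ((6 - p) * p ^ M))
    (hy : y ∈ mu (p ^ M)) (hy1 : y ≠ 1) (hξ : ξ ∈ mu (p ^ M)) (c : ℤ) :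
    (ξ * ·) '' Lam p ζ c y = Lam p ζ c (twist p ζ ξ c y) := by
  have hp0 := (prime_of_eq_two_or_three hp).ne_zero
  have hq := two_le_six_sub hp
  have hξ0 : ξ ≠ 0 := ne_zero_of_mem_mu (pow_ne_zero M hp0) hξ
  have hv := vval_twist hp hζ hy hy1 hξ c
  ext ε'
  constructor
  · rintro ⟨ε, ⟨hε, hεy⟩, rfl⟩
    exact ⟨mul_mem_nu hp0 hq hζ hξ hε, by rw [hv, mul_zpow, hεy, twist, mul_comm]⟩
  · rintro ⟨hε', hε'y⟩
    rw [hv, twist] at hε'y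
    refine ⟨ξ⁻¹ * ε', ⟨mul_mem_nu hp0 hq hζ (inv_mem_mu hξ) hε', ?_⟩,
      mul_inv_cancel_left₀ hξ0 ε'⟩
    rw [mul_zpow, hε'y, inv_zpow, mul_comm, mul_inv_cancel_right₀ (zpow_ne_zero _ hξ0)]

/-- Multiplication by `ξ` carries `Λ_c(y)` onto `Λ_c` of the twist of `y`, and the twist
permutes `S ∖ {1}`. -/
lemma mapDomain_mul_sum_theta (hp : p = 2 ∨ p = 3) (hζ : IsPrimitiveRoot ζ ((6 - p) * p ^ M))
    (hn : n < M) {S : Finset ℂ} (hS : ∀ y ∈ S, y ∈ mu (p ^ M))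
    (hSn : ∀ y ∈ S, ∀ η ∈ mu (p ^ n), η * y ∈ S) (hξ : ξ ∈ mu (p ^ (n + 1))) :
    mapDomain (Prod.map (ξ * ·) id) (∑ y ∈ S, theta p ζ y) = ∑ y ∈ S, theta p ζ y := by
  have hξM : ξ ∈ mu (p ^ M) := mu_mono (pow_dvd_pow p hn) hξ
  have hξ0 : ξ ≠ 0 :=
    ne_zero_of_mem_mu (pow_ne_zero M (prime_of_eq_two_or_three hp).ne_zero) hξM
  set S' := S.filter (· ≠ 1)
  have hS' : ∀ y ∈ S', y ∈ mu (p ^ M) ∧ y ≠ 1 := fun y hy =>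
    ⟨hS y (Finset.mem_filter.1 hy).1, (Finset.mem_filter.1 hy).2⟩
  have htwist : ∀ c, ∀ y ∈ S', twist p ζ ξ c y ∈ S' := fun c y hy => by
    have hv := one_le_vval hp hζ (hS' y hy).1
    refine Finset.mem_filter.2 ⟨?_, twist_ne_one hp hζ (hS' y hy).1 (hS' y hy).2 hξM c⟩
    rw [twist, mul_comm]
    exact hSn y (Finset.mem_filter.1 hy).1 _ (zpow_mem_mu_pow hξ (by omega) c)
  have key : ∀ c : ℤ, mapDomain (Prod.map (ξ * ·) id) (∑ y ∈ S', sumSingle p (Lam p ζ c y)) =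
      ∑ y ∈ S', sumSingle p (Lam p ζ c y) := fun c => by
    rw [mapDomain_finsetSum]
    refine Finset.sum_nbij' (twist p ζ ξ c) (twist p ζ ξ (-c)) (htwist c) (htwist (-c))
      (fun y hy => twist_neg_twist hp hζ (hS' y hy).1 (hS' y hy).2 hξM c)
      (fun y hy => by simpa using twist_neg_twist hp hζ (hS' y hy).1 (hS' y hy).2 hξM (-c))
      (fun y hy => ?_)
    rw [mapDomain_sumSingle (Lam_finite (prime_of_eq_two_or_three hp).ne_zero
        (two_le_six_sub hp) hζ c y) (mul_right_injective₀ hξ0).injOn,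
      image_mul_Lam hp hζ (hS' y hy).1 (hS' y hy).2 hξM]
  have hfilter : ∑ y ∈ S', theta p ζ y = ∑ y ∈ S, theta p ζ y :=
    Finset.sum_filter_of_ne fun y _ h hy1 => h (by rw [hy1, theta_one])
  rw [← hfilter, Finset.sum_congr rfl fun y hy => theta_of_ne_one (hS' y hy).2,
    Finset.sum_add_distrib, mapDomain_add, key, key]

end Twist

section OrbitSum

variable {R : Type*} {k : ℕ}

def orbitSum (R : Type*) [Semiring R] (k : ℕ) (j : ℂ × ℕ) : ℂ × ℕ →₀ R :=
  ∑ᶠ η ∈ mu k, single (η * j.1, j.2) 1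

lemma orbitSum_apply [Semiring R] (hk : k ≠ 0) {j : ℂ × ℕ} (hj : j.1 ≠ 0) (i : ℂ × ℕ) :
    orbitSum R k j i = if i.1 / j.1 ∈ mu k ∧ i.2 = j.2 then 1 else 0 := by
  have hmem : ∀ η : ℂ, (η * j.1, j.2) = i ↔ i.1 / j.1 = η ∧ i.2 = j.2 := fun η => by
    constructor
    · rintro rfl
      exact ⟨mul_div_cancel_right₀ η hj, rfl⟩
    · rintro ⟨rfl, h2⟩
      exact Prod.ext (div_mul_cancel₀ _ hj) h2.symm
  rw [orbitSum, finsum_mem_mu hk, finsetSum_apply]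
  simp_rw [single_apply, hmem, ite_and, Finset.sum_ite_eq, mem_nthRootsFinset_one hk]

/-- Induct on the support, peeling off one orbit at a time. -/
theorem mem_span_orbitSum [Ring R] (hk : k ≠ 0) {A : Set (ℂ × ℕ)} (hA : ∀ j ∈ A, j.1 ≠ 0)
    (T : ℂ × ℕ →₀ R) (hTA : ↑T.support ⊆ A)
    (hT : ∀ ξ ∈ mu k, ∀ i : ℂ × ℕ, T (ξ * i.1, i.2) = T i) :
    T ∈ Submodule.span R (orbitSum R k '' A) := by
  induction hm : T.support.card using Nat.strong_induction_on generalizing T with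
  | _ m ih =>
  obtain h0 | ⟨j, hj⟩ := T.support.eq_empty_or_nonempty
  · rw [support_eq_empty.1 h0]
    exact Submodule.zero_mem _
  have hj0 := hA j (hTA hj)
  set T' := T - T j • orbitSum R k j
  have hT' : ∀ i, T' i = if i.1 / j.1 ∈ mu k ∧ i.2 = j.2 then 0 else T i := fun i => by
    rw [Finsupp.sub_apply, Finsupp.smul_apply, orbitSum_apply hk hj0, smul_eq_mul]
    split_ifs with hi
    · rw [mul_one, sub_eq_zero, ← hT _ hi.1 j, div_mul_cancel₀ _ hj0, ← hi.2]
    · rw [mul_zero, sub_zero]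
  have hsupp : T'.support ⊆ T.support.erase j := fun i hi => by
    rw [Finsupp.mem_support_iff, hT'] at hi
    split_ifs at hi with horb
    · exact absurd rfl hi
    refine Finset.mem_erase.2 ⟨?_, Finsupp.mem_support_iff.2 hi⟩
    rintro rfl
    exact horb ⟨by rw [div_self hj0]; exact one_mem_mu, rfl⟩
  have hT'inv : ∀ ξ ∈ mu k, ∀ i : ℂ × ℕ, T' (ξ * i.1, i.2) = T' i := fun ξ hξ i => by
    rw [hT', hT', hT ξ hξ i, mul_div_assoc, mul_mem_mu_iff hk hξ]
  have hcard : T'.support.card < m :=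
    hm ▸ (Finset.card_le_card hsupp).trans_lt (Finset.card_erase_lt_of_mem hj)
  rw [← sub_add_cancel T (T j • orbitSum R k j)]
  exact Submodule.add_mem _
    (ih _ hcard T' ((Finset.coe_subset.2 (hsupp.trans (Finset.erase_subset _ _))).trans hTA)
      hT'inv rfl)
    (Submodule.smul_mem _ _ (Submodule.subset_span ⟨j, hTA hj, rfl⟩))

end OrbitSum

section CosetSums

variable {p M n : ℕ} {ζ x : ℂ}

lemma thetaT_one_eq (hM : p ^ M ≠ 0) :
    thetaT p M ζ 1 = -∑ y ∈ nthRootsFinset (p ^ M) (1 : ℂ), theta p ζ y := by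
  rw [thetaT, if_pos rfl, finsum_mem_mu hM]

/-- Over a coset `μ_k x`, `θ̃` differs from `θ` only at `1`, which lies in the coset iff
`x ∈ μ_k`. -/
lemma sum_thetaT_mul {k : ℕ} (hk : k ≠ 0) (hx : x ≠ 0) :
    ∑ η ∈ nthRootsFinset k (1 : ℂ), thetaT p M ζ (η * x) =
      ∑ η ∈ nthRootsFinset k (1 : ℂ), theta p ζ (η * x) +
        if x ∈ mu k then thetaT p M ζ 1 else 0 := by
  have h1 : ∀ η : ℂ, η * x = 1 ↔ x⁻¹ = η := fun η =>
    ⟨fun h => (eq_inv_of_mul_eq_one_left h).symm, fun h => h ▸ inv_mul_cancel₀ hx⟩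
  rw [Finset.sum_congr rfl fun η _ => thetaT_eq (η * x), Finset.sum_add_distrib]
  simp_rw [h1, Finset.sum_ite_eq,
    mem_nthRootsFinset_one hk, mem_mu, inv_pow, inv_eq_one]

lemma sum_thetaT_mul_eq_zero (hp : p = 2 ∨ p = 3) (hx : x ∈ mu (p ^ M)) :
    ∑ η ∈ nthRootsFinset (p ^ M) (1 : ℂ), thetaT p M ζ (η * x) = 0 := by
  have hM : p ^ M ≠ 0 := pow_ne_zero M (prime_of_eq_two_or_three hp).ne_zero
  rw [sum_thetaT_mul hM (ne_zero_of_mem_mu hM hx), if_pos hx, thetaT_one_eq hM,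
    sum_nthRootsFinset_mul hM hx (theta p ζ), add_neg_cancel]

/-- The sum is `μ_{p^{n+1}}`-invariant by `mapDomain_mul_sum_theta` and supported on
`ν_N × {0}`. -/
lemma sum_thetaT_mul_mem_span (hp : p = 2 ∨ p = 3) (hζ : IsPrimitiveRoot ζ ((6 - p) * p ^ M))
    (hn : n < M) (hx : x ∈ mu (p ^ M)) :
    ∑ η ∈ nthRootsFinset (p ^ n) (1 : ℂ), thetaT p M ζ (η * x) ∈
      Submodule.span (ZMod p) (orbitSum (ZMod p) (p ^ (n + 1)) '' (nu p ζ ×ˢ {0})) := by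
  have hp0 := (prime_of_eq_two_or_three hp).ne_zero
  have hN : (6 - p) * p ^ M ≠ 0 := Nat.mul_ne_zero (by omega) (pow_ne_zero M hp0)
  have hn0 : p ^ n ≠ 0 := pow_ne_zero n hp0
  have hM0 : p ^ M ≠ 0 := pow_ne_zero M hp0
  have hx0 := ne_zero_of_mem_mu hM0 hx
  have hnM : mu (p ^ n) ⊆ mu (p ^ M) := mu_mono (pow_dvd_pow p hn.le)
  refine mem_span_orbitSum (pow_ne_zero _ hp0)
    (fun j hj => ne_zero_of_mem_mu hN (nu_subset_mu hζ hj.1)) _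
    ((mem_supported _ _).1 (Submodule.sum_mem _ fun η _ => thetaT_mem_supported _))
    fun ξ hξ i => ?_
  have hξ0 := ne_zero_of_mem_mu (pow_ne_zero _ hp0) hξ
  have hcoset : mapDomain (Prod.map (ξ * ·) id)
      (∑ y ∈ (nthRootsFinset (p ^ n) (1 : ℂ)).image (· * x), theta p ζ y) =
      ∑ y ∈ (nthRootsFinset (p ^ n) (1 : ℂ)).image (· * x), theta p ζ y := by
    refine mapDomain_mul_sum_theta hp hζ hn (fun y hy => ?_) (fun y hy η hη => ?_) hξ
    · obtain ⟨η, hη, rfl⟩ := Finset.mem_image.1 hy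
      exact mul_mem_mu (hnM ((mem_nthRootsFinset_one hn0).1 hη)) hx
    · obtain ⟨η', hη', rfl⟩ := Finset.mem_image.1 hy
      exact Finset.mem_image.2 ⟨η * η', (mem_nthRootsFinset_one hn0).2
        (mul_mem_mu hη ((mem_nthRootsFinset_one hn0).1 hη')), mul_assoc _ _ _⟩
  have hall : mapDomain (Prod.map (ξ * ·) id) (thetaT p M ζ 1) = thetaT p M ζ 1 := by
    rw [thetaT_one_eq hM0, ← lmapDomain_apply (ZMod p) (ZMod p), map_neg, lmapDomain_apply,
      mapDomain_mul_sum_theta hp hζ hn (fun y hy => (mem_nthRootsFinset_one hM0).1 hy)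
        (fun y hy η hη => (mem_nthRootsFinset_one hM0).2
          (mul_mem_mu (hnM hη) ((mem_nthRootsFinset_one hM0).1 hy))) hξ]
  have hinv : mapDomain (Prod.map (ξ * ·) id)
      (∑ η ∈ nthRootsFinset (p ^ n) (1 : ℂ), thetaT p M ζ (η * x)) =
      ∑ η ∈ nthRootsFinset (p ^ n) (1 : ℂ), thetaT p M ζ (η * x) := by
    rw [sum_thetaT_mul hn0 hx0, mapDomain_add,
      ← Finset.sum_image fun a _ b _ h => mul_right_cancel₀ hx0 h, hcoset]
    split_ifs
    · rw [hall]
    · rw [mapDomain_zero]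
  have := mapDomain_apply ((mul_right_injective₀ hξ0).prodMap Function.injective_id)
    (∑ η ∈ nthRootsFinset (p ^ n) (1 : ℂ), thetaT p M ζ (η * x)) i
  rw [hinv] at this
  exact this

end CosetSums

section GaloisExponent

variable {N p M : ℕ}

lemma val_mul_val_inv_modEq [NeZero N] (σ : (ZMod N)ˣ) :
    (σ : ZMod N).val * ((σ⁻¹ : (ZMod N)ˣ) : ZMod N).val ≡ 1 [MOD N] := by
  rw [← ZMod.natCast_eq_natCast_iff, Nat.cast_mul, ZMod.natCast_zmod_val,
    ZMod.natCast_zmod_val, Units.mul_inv, Nat.cast_one]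

lemma val_modEq_one_of_mem_Gal [NeZero ((6 - p) * p ^ M)] {σ : (ZMod ((6 - p) * p ^ M))ˣ}
    (hσ : σ ∈ Gal p M) : (σ : ZMod ((6 - p) * p ^ M)).val ≡ 1 [MOD 6 - p] := by
  rw [← ZMod.natCast_eq_natCast_iff, ZMod.natCast_val, Nat.cast_one]
  exact congrArg Units.val (MonoidHom.mem_ker.1 hσ)

end GaloisExponent

section Rtil

variable {p M n : ℕ} {ζ : ℂ}

lemma Rtil_single (ε₁ ε₂ : ℂ) :
    Rtil p M ζ 2 0 (single ![((ε₁, 0) : Idx), ((ε₂, 0) : Idx)] 1) =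
      mapDomain (fun b : Idx => ![((ε₁, 0) : Idx), b]) (thetaT p M ζ (ε₂ / ε₁)) := by
  rw [Rtil, linearCombination_single, one_smul, RtilBase, dif_pos (by norm_num)]
  refine (if_pos rfl).trans ?_
  congr 1
  funext b j
  fin_cases j <;> rfl

lemma single_mem_W1Part {ε₁ ε₂ : ℂ} (h₁ : ε₁ ∈ nu p ζ) (h₂ : ε₂ ∈ nu p ζ) :
    single ![((ε₁, 0) : Idx), ((ε₂, 0) : Idx)] (1 : ZMod p) ∈ W1Part p ζ 2 :=
  Submodule.subset_span ⟨_, fun i => by fin_cases i <;> exact ⟨‹_›, rfl⟩, rfl⟩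

lemma Rtil_actW (hp : p = 2 ∨ p = 3) (hζ : IsPrimitiveRoot ζ ((6 - p) * p ^ M))
    (σ : Gal p M) {w : Wt p 2} (hw : w ∈ W1Part p ζ 2) :
    Rtil p M ζ 2 0 (actW p M 2 σ w) = actW p M 2 σ (Rtil p M ζ 2 0 w) := by
  have hp0 := (prime_of_eq_two_or_three hp).ne_zero
  have : NeZero ((6 - p) * p ^ M) := ⟨Nat.mul_ne_zero (by omega) (pow_ne_zero M hp0)⟩
  set a := ((σ : (ZMod ((6 - p) * p ^ M))ˣ) : ZMod ((6 - p) * p ^ M)).val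
  refine LinearMap.eqOn_span (f := Rtil p M ζ 2 0 ∘ₗ actW p M 2 σ)
    (g := actW p M 2 σ ∘ₗ Rtil p M ζ 2 0) ?_ hw
  rintro _ ⟨e, he, rfl⟩
  obtain ⟨ε₁, ε₂, h₁, h₂, rfl⟩ : ∃ ε₁ ε₂, ε₁ ∈ nu p ζ ∧ ε₂ ∈ nu p ζ ∧
      e = ![((ε₁, 0) : Idx), ((ε₂, 0) : Idx)] :=
    ⟨(e 0).1, (e 1).1, (he 0).1, (he 1).1, by
      funext i; fin_cases i <;> exact Prod.ext rfl (he _).2⟩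
  have hact : actW p M 2 σ (single ![((ε₁, 0) : Idx), ((ε₂, 0) : Idx)] 1) =
      single ![((ε₁ ^ a, 0) : Idx), ((ε₂ ^ a, 0) : Idx)] 1 := by
    rw [actW, lmapDomain_apply, mapDomain_single]
    congr 1
    funext i
    fin_cases i <;> rfl
  simp only [LinearMap.comp_apply]
  rw [hact, Rtil_single, Rtil_single, ← div_pow,
    ← mapDomain_pow_thetaT hp hζ (val_modEq_one_of_mem_Gal σ.2) (val_mul_val_inv_modEq _)
      (div_mem_mu_of_mem_nu hp0 (two_le_six_sub hp) hζ h₁ h₂),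
    actW, lmapDomain_apply, ← mapDomain_comp, ← mapDomain_comp]
  congr 1
  funext b i
  fin_cases i <;> rfl

lemma Rtil_actA (hp : p = 2 ∨ p = 3) (hζ : IsPrimitiveRoot ζ ((6 - p) * p ^ M))
    (g : GA p M) {w : Wt p 2} (hw : w ∈ W1Part p ζ 2) :
    Rtil p M ζ 2 0 (actA p M 2 g w) = actA p M 2 g (Rtil p M ζ 2 0 w) := by
  simp only [actA, Finsupp.sum, LinearMap.sum_apply, LinearMap.smul_apply, map_sum, map_smul,
    Rtil_actW hp hζ _ hw]

lemma mapDomain_orbitSum {k : ℕ} (hk : k ≠ 0) (ε₁ ε₂ : ℂ) :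
    mapDomain (fun b : Idx => ![((ε₁, 0) : Idx), b]) (orbitSum (ZMod p) k (ε₂, 0)) =
      ∑ᶠ η ∈ mu k, single ![((ε₁, 0) : Idx), ((η * ε₂, 0) : Idx)] (1 : ZMod p) := by
  rw [orbitSum, finsum_mem_mu hk, finsum_mem_mu hk, mapDomain_finsetSum]
  simp only [mapDomain_single]

lemma actA_mapDomain_orbitSum_mem_Vmn (hp0 : p ≠ 0) {m : ℕ} (hn : n ≤ M) {g : GA p M}
    (hg : g ∈ IG p M ^ m) {ε₁ ε₂ : ℂ} (h₁ : ε₁ ∈ nu p ζ) (h₂ : ε₂ ∈ nu p ζ) :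
    actA p M 2 g (mapDomain (fun b : Idx => ![((ε₁, 0) : Idx), b])
      (orbitSum (ZMod p) (p ^ n) (ε₂, 0))) ∈ Vmn p M ζ m n := by
  rw [Vmn, if_pos hn, mapDomain_orbitSum (pow_ne_zero n hp0)]
  exact Submodule.subset_span ⟨g, hg, ε₁, h₁, ε₂, h₂, rfl⟩

lemma mapDomain_orbitSum_mem_W1Part (hp : p = 2 ∨ p = 3)
    (hζ : IsPrimitiveRoot ζ ((6 - p) * p ^ M)) (hn : n ≤ M) {ε₁ ε₂ : ℂ} (h₁ : ε₁ ∈ nu p ζ)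
    (h₂ : ε₂ ∈ nu p ζ) :
    mapDomain (fun b : Idx => ![((ε₁, 0) : Idx), b]) (orbitSum (ZMod p) (p ^ n) (ε₂, 0)) ∈
      W1Part p ζ 2 := by
  have hp0 := (prime_of_eq_two_or_three hp).ne_zero
  rw [mapDomain_orbitSum (pow_ne_zero n hp0), finsum_mem_mu (pow_ne_zero n hp0)]
  exact Submodule.sum_mem _ fun η hη => single_mem_W1Part h₁
    (mul_mem_nu hp0 (two_le_six_sub hp) hζ
      (mu_mono (pow_dvd_pow p hn) ((mem_nthRootsFinset_one (pow_ne_zero n hp0)).1 hη)) h₂)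

lemma Rtil_mapDomain_orbitSum {k : ℕ} (hk : k ≠ 0) (ε₁ ε₂ : ℂ) :
    Rtil p M ζ 2 0 (mapDomain (fun b : Idx => ![((ε₁, 0) : Idx), b])
      (orbitSum (ZMod p) k (ε₂, 0))) =
    mapDomain (fun b : Idx => ![((ε₁, 0) : Idx), b])
      (∑ η ∈ nthRootsFinset k (1 : ℂ), thetaT p M ζ (η * (ε₂ / ε₁))) := by
  rw [mapDomain_orbitSum hk, finsum_mem_mu hk, map_sum, mapDomain_finsetSum]
  simp only [Rtil_single, mul_div_assoc]

end Rtil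

/-- For all integers `m, n ≥ 0`, one has `R̃(V(m,n)) ⊆ V(m,n+1)`. -/
theorem Rtil_Vmn_subset (p M : ℕ) (hp : p = 2 ∨ p = 3) (ζ : ℂ)
    (hζ : IsPrimitiveRoot ζ ((6 - p) * p ^ M)) (m n : ℕ) :
    ∀ u ∈ Vmn p M ζ m n, Rtil p M ζ 2 0 u ∈ Vmn p M ζ m (n + 1) := by
  have hp0 := (prime_of_eq_two_or_three hp).ne_zero
  intro u hu
  unfold Vmn at hu
  split_ifs at hu with hn
  swap
  · rw [(Submodule.mem_bot _).1 hu, map_zero]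
    exact Submodule.zero_mem _
  refine (Submodule.span_le (p := (Vmn p M ζ m (n + 1)).comap (Rtil p M ζ 2 0))).2 ?_ hu
  rintro _ ⟨g, hg, ε₁, h₁, ε₂, h₂, rfl⟩
  rw [SetLike.mem_coe, Submodule.mem_comap, ← mapDomain_orbitSum (pow_ne_zero n hp0),
    Rtil_actA hp hζ g (mapDomain_orbitSum_mem_W1Part hp hζ hn h₁ h₂),
    Rtil_mapDomain_orbitSum (pow_ne_zero n hp0)]
  have hx := div_mem_mu_of_mem_nu hp0 (two_le_six_sub hp) hζ h₁ h₂
  obtain hn | rfl := hn.lt_or_eq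
  · refine (Submodule.map_span_le (actA p M 2 g ∘ₗ
      lmapDomain (ZMod p) (ZMod p) fun b : Idx => ![((ε₁, 0) : Idx), b]) _ _).2 ?_
      (Submodule.mem_map_of_mem (sum_thetaT_mul_mem_span hp hζ hn hx))
    rintro _ ⟨⟨ε, _⟩, ⟨hε, rfl⟩, rfl⟩
    exact actA_mapDomain_orbitSum_mem_Vmn hp0 hn hg h₁ hε
  · rw [sum_thetaT_mul_eq_zero hp hx, mapDomain_zero, map_zero]
    exact Submodule.zero_mem _

end CycloMZV
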